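/- arXiv:1809.00697 — 4 statements merged into one kernel-verified Lean document; each statement's English description precedes it below -/
import Mathlib

section
/- Let X be a nonempty finite set and let C : Δ²(X) → [0,∞) be Borel measurable such that (i) C(δ_μ) = 0 for every μ ∈ Δ(X); (ii) C(λπ₁ + (1−λ)π₂) ≤ λC(π₁) + (1−λ)C(π₂) whenever π₁, π₂ ∈ Δ²(X) satisfy bar(π₁) = bar(π₂) and λ ∈ [0,1]; and (iii) C satisfies Axiom 2 (subadditivity). Then for every π ∈ Δ²(X) and every λ ∈ [0,1], writing μ₀ = bar(π), one has C(λ·π + (1−λ)·δ_{μ₀}) = λ·C(π). -/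
/-!
Convexity along mixtures with a common barycenter, together with `C δ = 0`, gives
`C (λ π + (1 - λ) δ_{μ₀}) ≤ λ C π`. Conversely, `π` is recovered from `σ = λ π + (1 - λ) δ_{μ₀}`
by the kernel that keeps every posterior `μ ≠ μ₀` and sends `μ₀`, an atom of `σ` of mass
`c = λ π{μ₀} + 1 - λ`, to `τ = α π + (1 - α) δ_{μ₀}` with `c α = 1 - λ`. Subadditivity then gives
`C π ≤ C σ + c C τ ≤ C σ + c α C π = C σ + (1 - λ) C π`.
-/

set_option linter.unusedSectionVars false

open MeasureTheory

namespace IC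

variable {X : Type*} [Fintype X] [Nonempty X]

/-- The belief simplex Δ(X). -/
abbrev Δ (X : Type*) [Fintype X] : Set (X → ℝ) := stdSimplex ℝ X

/-- Δ²(X): Borel probability measures on Δ(X). -/
abbrev PM (X : Type*) [Fintype X] := ProbabilityMeasure (Δ X)

/-- Barycenter of π ∈ Δ²(X). -/
noncomputable def bar (π : PM X) : X → ℝ :=
  fun x => ∫ ν, (ν : X → ℝ) x ∂(π : Measure (Δ X))

lemma eval_integrable (π : PM X) (x : X) :
    Integrable (fun ν : Δ X => (ν : X → ℝ) x) (π : Measure (Δ X)) := by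
  have hc : Continuous (fun ν : Δ X => (ν : X → ℝ) x) :=
    (continuous_apply x).comp continuous_subtype_val
  refine (integrable_const (1 : ℝ)).mono' hc.aestronglyMeasurable ?_
  refine Filter.Eventually.of_forall fun ν => ?_
  rw [Real.norm_eq_abs]
  refine (abs_of_nonneg (ν.2.1 x)).trans_le ?_
  calc (ν : X → ℝ) x ≤ ∑ y, (ν : X → ℝ) y :=
        Finset.single_le_sum (fun y _ => ν.2.1 y) (Finset.mem_univ x)
    _ = 1 := ν.2.2

lemma bar_mem (π : PM X) : bar π ∈ Δ X := by
  constructor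
  · intro x; exact integral_nonneg fun ν => ν.2.1 x
  · calc ∑ x, bar π x
        = ∫ ν, ∑ x, (ν : X → ℝ) x ∂(π : Measure (Δ X)) :=
          (integral_finsetSum Finset.univ fun x _ => eval_integrable π x).symm
      _ = ∫ _ν, (1 : ℝ) ∂(π : Measure (Δ X)) :=
          integral_congr_ae (Filter.Eventually.of_forall fun ν => ν.2.2)
      _ = 1 := by simp

/-- Barycenter as a point of the simplex. -/
noncomputable def barPt (π : PM X) : Δ X := ⟨bar π, bar_mem π⟩

/-- Dirac measure as an element of Δ²(X). -/
noncomputable def diracPM (μ : Δ X) : PM X := ⟨Measure.dirac μ, inferInstance⟩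

lemma isProbabilityMeasure_bind {α β : Type*} [MeasurableSpace α] [MeasurableSpace β]
    (π : Measure α) [IsProbabilityMeasure π] (k : α → Measure β) (hk : Measurable k)
    (hkp : ∀ a, IsProbabilityMeasure (k a)) : IsProbabilityMeasure (π.bind k) := by
  constructor
  rw [Measure.bind_apply MeasurableSet.univ hk.aemeasurable]
  have h1 : ∀ a, k a Set.univ = 1 := fun a => (hkp a).measure_univ
  simp [h1]

/-- The Borel σ-algebra on probability measures (generated by evaluations, via the
canonical σ-algebra on measures). -/
instance instMeasurableSpacePM {Ω : Type*} [MeasurableSpace Ω] :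
    MeasurableSpace (ProbabilityMeasure Ω) :=
  MeasurableSpace.comap (fun μ => (μ : Measure Ω)) inferInstance

lemma measurable_pmCoe {Ω : Type*} [MeasurableSpace Ω] :
    Measurable (fun μ : ProbabilityMeasure Ω => (μ : Measure Ω)) :=
  measurable_iff_comap_le.mpr le_rfl

/-- Composition π∘k of an information structure with a (Borel measurable) kernel. -/
noncomputable def comp (π : PM X) (k : Δ X → PM X) (hk : Measurable k) : PM X :=
  ⟨(π : Measure (Δ X)).bind (fun μ => (k μ : Measure (Δ X))),
    isProbabilityMeasure_bind _ _ (measurable_pmCoe.comp hk) (fun μ => (k μ).2)⟩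

/-- ∫ π dP(π), for P a probability measure over Δ²(X). -/
noncomputable def joinPM (P : ProbabilityMeasure (PM X)) : PM X :=
  ⟨(P : Measure (PM X)).bind (fun π => (π : Measure (Δ X))),
    isProbabilityMeasure_bind _ _ measurable_pmCoe (fun π => π.2)⟩

/-- A kernel is mean preserving π-a.e. -/
def MeanPreservingAE (π : PM X) (k : Δ X → PM X) : Prop :=
  ∀ᵐ μ ∂(π : Measure (Δ X)), bar (k μ) = (μ : X → ℝ)

/-- Axiom 1: Blackwell monotonicity. -/
def Axiom1 (C : PM X → ℝ) : Prop :=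
  ∀ (π : PM X) (k : Δ X → PM X) (hk : Measurable k),
    MeanPreservingAE π k → C π ≤ C (comp π k hk)

/-- Axiom 2: subadditivity. -/
def Axiom2 (C : PM X → ℝ) : Prop :=
  ∀ (π : PM X) (k : Δ X → PM X) (hk : Measurable k),
    C (comp π k hk) ≤ C π + ∫ μ, C (k μ) ∂(π : Measure (Δ X))

/-- The class 𝒞 of direct information cost functions. -/
structure ClassC (C : PM X → ℝ) : Prop where
  nonneg : ∀ π, 0 ≤ C π
  bounded : ∃ M : ℝ, ∀ π, C π ≤ M
  measurable : Measurable C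
  dirac_zero : ∀ μ : Δ X, C (diracPM μ) = 0
  mixing : ∀ P : ProbabilityMeasure (PM X),
    (∃ μ₀ : X → ℝ, ∀ᵐ π ∂(P : Measure (PM X)), bar π = μ₀) →
    C (joinPM P) ≤ ∫ π, C π ∂(P : Measure (PM X))
  contOn : ∀ X' : Set X, ContinuousOn C {π : PM X | {x | 0 < bar π x} = X'}

/-- A replication process for π. -/
structure RepProcess (π : PM X) where
  T : ℕ
  seq : ℕ → PM X
  k : ℕ → Δ X → PM X
  r : ℕ → Δ X → PM X
  k_meas : ∀ t, Measurable (k t)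
  r_meas : ∀ t, Measurable (r t)
  init : seq 0 = diracPM (barPt π)
  final : seq (2 * T) = π
  k_mp : ∀ t, t < T → MeanPreservingAE (seq (2 * t)) (k t)
  k_comp : ∀ t, (ht : t < T) → seq (2 * t + 1) = comp (seq (2 * t)) (k t) (k_meas t)
  r_mp : ∀ t, t < T → MeanPreservingAE (seq (2 * t + 2)) (r t)
  r_comp : ∀ t, (ht : t < T) → seq (2 * t + 1) = comp (seq (2 * t + 2)) (r t) (r_meas t)

/-- Total cost of a replication process. -/
noncomputable def totalCost (C : PM X → ℝ) {π : PM X} (R : RepProcess π) : ℝ :=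
  ∑ t ∈ Finset.range R.T, ∫ μ, C (R.k t μ) ∂((R.seq (2 * t) : Measure (Δ X)))

/-- The indirect cost φ(C). -/
noncomputable def phi (C : PM X → ℝ) (π : PM X) : ℝ :=
  sInf (Set.range fun R : RepProcess π => totalCost C R)

/-- Uniformly posterior separable cost. -/
def UPS (C : PM X → ℝ) : Prop :=
  ∃ H : (X → ℝ) → ℝ, ConvexOn ℝ (Δ X) H ∧
    ∀ π : PM X, C π = (∫ ν, H (ν : X → ℝ) ∂(π : Measure (Δ X))) - H (bar π)


/-- Convex combination λ·π₁ + (1−λ)·π₂ of two information structures (setwise). -/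
noncomputable def mixPM (lam : ℝ) (h0 : 0 ≤ lam) (h1 : lam ≤ 1) (π₁ π₂ : PM X) : PM X :=
  ⟨ENNReal.ofReal lam • (π₁ : Measure (Δ X)) + ENNReal.ofReal (1 - lam) • (π₂ : Measure (Δ X)), by
    constructor
    rw [Measure.add_apply, Measure.smul_apply, Measure.smul_apply, measure_univ, measure_univ,
      smul_eq_mul, smul_eq_mul, mul_one, mul_one,
      ← ENNReal.ofReal_add h0 (by linarith : (0:ℝ) ≤ 1 - lam)]
    rw [show lam + (1 - lam) = 1 by ring, ENNReal.ofReal_one]⟩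

section UpdateDirac

variable {α : Type*} [MeasurableSpace α] [MeasurableSingletonClass α] [DecidableEq α]

theorem measurable_update_dirac (a : α) (τ : Measure α) :
    Measurable (Function.update Measure.dirac a τ) := by
  have h : Function.update Measure.dirac a τ = fun x => if x = a then τ else Measure.dirac x :=
    funext fun x => Function.update_apply _ _ _ _
  rw [h]
  exact Measurable.ite (measurableSet_singleton a) measurable_const Measure.measurable_dirac

theorem bind_update_dirac (σ τ : Measure α) (a : α) :
    σ.bind (Function.update Measure.dirac a τ) = σ.restrict {a}ᶜ + σ {a} • τ := by
  ext s hs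
  have h_off : ∫⁻ x in {a}ᶜ, Function.update Measure.dirac a τ x s ∂σ = σ.restrict {a}ᶜ s := by
    rw [← lintegral_indicator_one hs]
    refine setLIntegral_congr_fun (measurableSet_singleton a).compl fun x hx => ?_
    rw [Function.update_of_ne hx, Measure.dirac_apply' _ hs]
  rw [Measure.bind_apply hs (measurable_update_dirac a τ).aemeasurable,
    ← lintegral_add_compl _ (measurableSet_singleton a), lintegral_singleton, h_off,
    Function.update_self, Measure.add_apply, Measure.smul_apply, smul_eq_mul, mul_comm, add_comm]

end UpdateDirac

theorem coe_comp_update_diracPM (μ₀ : Δ X) (τ : PM X) :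
    (fun μ => (Function.update diracPM μ₀ τ μ : Measure (Δ X)))
      = Function.update Measure.dirac μ₀ (τ : Measure (Δ X)) :=
  Function.comp_update _ _ _ _

theorem measurable_update_diracPM (μ₀ : Δ X) (τ : PM X) :
    Measurable (Function.update diracPM μ₀ τ) :=
  measurable_comap_iff.mpr <| by
    simpa only [Function.comp_def, coe_comp_update_diracPM] using measurable_update_dirac μ₀ _

theorem coe_mixPM {lam : ℝ} (h0 : 0 ≤ lam) (h1 : lam ≤ 1) (π₁ π₂ : PM X) :
    (mixPM lam h0 h1 π₁ π₂ : Measure (Δ X))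
      = ENNReal.ofReal lam • (π₁ : Measure (Δ X))
        + ENNReal.ofReal (1 - lam) • (π₂ : Measure (Δ X)) :=
  rfl

theorem bar_diracPM (μ : Δ X) : bar (diracPM μ) = (μ : X → ℝ) := by
  funext x
  simp [bar, diracPM]

theorem mixPM_diracPM_apply_self {lam : ℝ} (h0 : 0 ≤ lam) (h1 : lam ≤ 1) (π : PM X) (μ₀ : Δ X) :
    (mixPM lam h0 h1 π (diracPM μ₀) : Measure (Δ X)) {μ₀}
      = ENNReal.ofReal (lam * (π : Measure (Δ X)).real {μ₀} + (1 - lam)) := by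
  rw [coe_mixPM, Measure.add_apply, Measure.smul_apply, Measure.smul_apply, smul_eq_mul,
    smul_eq_mul]
  simp [diracPM, Measure.real, ENNReal.ofReal_add, ENNReal.ofReal_mul, h0, mul_nonneg, h1]

/-- The share of the atom of `λ π + (1 - λ) δ_{μ₀}` at `μ₀` that comes from the Dirac part,
when `π` has mass `q` at `μ₀`. If the atom is empty (`λ = 1`, `q = 0`) the division yields the junk
value `0`, for which the identities below still hold. -/
noncomputable def diracShare (lam q : ℝ) : ℝ := (1 - lam) / (lam * q + (1 - lam))

section DiracShare

variable {lam q : ℝ}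

theorem diracShare_nonneg (h0 : 0 ≤ lam) (h1 : lam ≤ 1) (hq : 0 ≤ q) : 0 ≤ diracShare lam q :=
  div_nonneg (by linarith) (by nlinarith)

theorem diracShare_le_one (h0 : 0 ≤ lam) (h1 : lam ≤ 1) (hq : 0 ≤ q) : diracShare lam q ≤ 1 :=
  div_le_one_of_le₀ (by nlinarith) (by nlinarith)

theorem mul_diracShare (h0 : 0 ≤ lam) (h1 : lam ≤ 1) (hq : 0 ≤ q) :
    (lam * q + (1 - lam)) * diracShare lam q = 1 - lam := by
  rcases (show 0 ≤ lam * q + (1 - lam) by nlinarith).eq_or_lt with h | h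
  · have : 1 - lam = 0 := by nlinarith
    simp [diracShare, this]
  · exact mul_div_cancel₀ _ h.ne'

theorem mul_one_sub_diracShare (h0 : 0 ≤ lam) (h1 : lam ≤ 1) (hq : 0 ≤ q) :
    (lam * q + (1 - lam)) * (1 - diracShare lam q) = lam * q := by
  rw [mul_one_sub, mul_diracShare h0 h1 hq]
  ring

end DiracShare

theorem comp_update_diracPM_mixPM {lam : ℝ} (h0 : 0 ≤ lam) (h1 : lam ≤ 1) (π : PM X) (μ₀ : Δ X) :
    let q := (π : Measure (Δ X)).real {μ₀}
    let τ := mixPM (diracShare lam q) (diracShare_nonneg h0 h1 measureReal_nonneg)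
      (diracShare_le_one h0 h1 measureReal_nonneg) π (diracPM μ₀)
    comp (mixPM lam h0 h1 π (diracPM μ₀)) (Function.update diracPM μ₀ τ)
      (measurable_update_diracPM μ₀ τ) = π := by
  intro q τ
  have hq : 0 ≤ q := measureReal_nonneg
  set p : Measure (Δ X) := (π : Measure (Δ X))
  have h_rest : (mixPM lam h0 h1 π (diracPM μ₀) : Measure (Δ X)).restrict {μ₀}ᶜ
      = ENNReal.ofReal lam • p.restrict {μ₀}ᶜ := by
    have h_dirac : ((diracPM μ₀ : PM X) : Measure (Δ X)).restrict {μ₀}ᶜ = 0 := by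
      simp [diracPM, restrict_dirac]
    rw [coe_mixPM, Measure.restrict_add, Measure.restrict_smul, Measure.restrict_smul, h_dirac,
      smul_zero, add_zero]
  have h_atom : (mixPM lam h0 h1 π (diracPM μ₀) : Measure (Δ X)) {μ₀} • (τ : Measure (Δ X))
      = ENNReal.ofReal (1 - lam) • p + ENNReal.ofReal lam • p.restrict {μ₀} := by
    rw [mixPM_diracPM_apply_self, coe_mixPM, smul_add, smul_smul, smul_smul,
      ← ENNReal.ofReal_mul (by nlinarith), ← ENNReal.ofReal_mul (by nlinarith),
      mul_diracShare h0 h1 hq, mul_one_sub_diracShare h0 h1 hq, Measure.restrict_singleton,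
      smul_smul, ENNReal.ofReal_mul h0, ofReal_measureReal]
    rfl
  apply Subtype.ext
  change (mixPM lam h0 h1 π (diracPM μ₀) : Measure (Δ X)).bind
    (fun μ => (Function.update diracPM μ₀ τ μ : Measure (Δ X))) = p
  rw [coe_comp_update_diracPM, bind_update_dirac, h_rest, h_atom, add_left_comm, ← smul_add,
    Measure.restrict_compl_add_restrict (measurableSet_singleton μ₀), ← add_smul,
    add_comm (ENNReal.ofReal (1 - lam)), ← ENNReal.ofReal_add h0 (by linarith), add_sub_cancel,
    ENNReal.ofReal_one, one_smul]

def MixtureConvex (C : PM X → ℝ) : Prop :=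
  ∀ (π₁ π₂ : PM X) (lam : ℝ) (h0 : 0 ≤ lam) (h1 : lam ≤ 1),
    bar π₁ = bar π₂ → C (mixPM lam h0 h1 π₁ π₂) ≤ lam * C π₁ + (1 - lam) * C π₂

section Cost

variable {C : PM X → ℝ}

theorem integral_cost_update_diracPM (hdirac : ∀ μ : Δ X, C (diracPM μ) = 0)
    (σ : PM X) (μ₀ : Δ X) (τ : PM X) :
    ∫ μ, C (Function.update diracPM μ₀ τ μ) ∂(σ : Measure (Δ X))
      = (σ : Measure (Δ X)).real {μ₀} * C τ := by
  have h_indicator : (fun μ => C (Function.update diracPM μ₀ τ μ))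
      = Set.indicator {μ₀} (fun _ => C τ) := by
    funext μ
    rcases eq_or_ne μ μ₀ with rfl | h
    · simp
    · simp [h, hdirac]
  rw [h_indicator, integral_indicator_const _ (measurableSet_singleton μ₀), smul_eq_mul]

theorem cost_mixPM_diracPM_barPt_le (hdirac : ∀ μ : Δ X, C (diracPM μ) = 0)
    (hconv : MixtureConvex C) (π : PM X) {lam : ℝ} (h0 : 0 ≤ lam) (h1 : lam ≤ 1) :
    C (mixPM lam h0 h1 π (diracPM (barPt π))) ≤ lam * C π := by
  have h := hconv π (diracPM (barPt π)) lam h0 h1 (bar_diracPM (barPt π)).symm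
  rwa [hdirac, mul_zero, add_zero] at h

theorem mul_cost_le_cost_mixPM_diracPM_barPt (hdirac : ∀ μ : Δ X, C (diracPM μ) = 0)
    (hconv : MixtureConvex C) (hsub : Axiom2 C) (π : PM X) {lam : ℝ} (h0 : 0 ≤ lam) (h1 : lam ≤ 1) :
    lam * C π ≤ C (mixPM lam h0 h1 π (diracPM (barPt π))) := by
  set q := (π : Measure (Δ X)).real {barPt π}
  have hq : 0 ≤ q := measureReal_nonneg
  have hc : 0 ≤ lam * q + (1 - lam) := by nlinarith
  set σ := mixPM lam h0 h1 π (diracPM (barPt π))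
  set τ := mixPM (diracShare lam q) (diracShare_nonneg h0 h1 hq) (diracShare_le_one h0 h1 hq) π
    (diracPM (barPt π))
  have h_sub := hsub σ (Function.update diracPM (barPt π) τ) (measurable_update_diracPM _ τ)
  rw [comp_update_diracPM_mixPM, integral_cost_update_diracPM hdirac] at h_sub
  have h_atom : (σ : Measure (Δ X)).real {barPt π} = lam * q + (1 - lam) := by
    rw [Measure.real, mixPM_diracPM_apply_self, ENNReal.toReal_ofReal hc]
  have h_τ : C τ ≤ diracShare lam q * C π := cost_mixPM_diracPM_barPt_le hdirac hconv π _ _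
  calc lam * C π = C π - (1 - lam) * C π := by ring
    _ ≤ C σ + (lam * q + (1 - lam)) * C τ - (1 - lam) * C π := by rw [← h_atom]; linarith
    _ ≤ C σ + (lam * q + (1 - lam)) * (diracShare lam q * C π) - (1 - lam) * C π := by gcongr
    _ = C σ := by rw [← mul_assoc, mul_diracShare h0 h1 hq]; ring

end Cost

theorem dilution_cost_general (C : PM X → ℝ)
    (hdirac : ∀ μ : Δ X, C (diracPM μ) = 0)
    (hconv : ∀ (π₁ π₂ : PM X) (lam : ℝ) (h0 : 0 ≤ lam) (h1 : lam ≤ 1),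
      bar π₁ = bar π₂ → C (mixPM lam h0 h1 π₁ π₂) ≤ lam * C π₁ + (1 - lam) * C π₂)
    (hsub : Axiom2 C) :
    ∀ (π : PM X) (lam : ℝ) (h0 : 0 ≤ lam) (h1 : lam ≤ 1),
      C (mixPM lam h0 h1 π (diracPM (barPt π))) = lam * C π :=
  fun π _ h0 h1 => le_antisymm (cost_mixPM_diracPM_barPt_le hdirac hconv π h0 h1)
    (mul_cost_le_cost_mixPM_diracPM_barPt hdirac hconv hsub π h0 h1)

/-- Lemma 1 in the paper: under Axiom 0 (Dirac costs zero, mixture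
convexity at a fixed barycenter) and Axiom 2 (subadditivity), the cost of the dilution
λ·π + (1−λ)·δ_{bar(π)} equals λ·C(π). -/
theorem dilution_cost (C : PM X → ℝ)
    (hmeas : Measurable C) (hnonneg : ∀ π : PM X, 0 ≤ C π)
    (hdirac : ∀ μ : Δ X, C (diracPM μ) = 0)
    (hconv : ∀ (π₁ π₂ : PM X) (lam : ℝ) (h0 : 0 ≤ lam) (h1 : lam ≤ 1),
      bar π₁ = bar π₂ → C (mixPM lam h0 h1 π₁ π₂) ≤ lam * C π₁ + (1 - lam) * C π₂)
    (hsub : Axiom2 C) :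
    ∀ (π : PM X) (lam : ℝ) (h0 : 0 ≤ lam) (h1 : lam ≤ 1),
      C (mixPM lam h0 h1 π (diracPM (barPt π))) = lam * C π :=
  dilution_cost_general C hdirac hconv hsub

end IC
end

section
/- Let P and P' be n×k real matrices with nonnegative entries such that every column of P and of P' sums to 1, and suppose no two distinct rows of P are proportional (for i ≠ j there is no c ∈ ℝ with row i of P equal to c times row j of P or row j equal to c times row i). Suppose there exist n×n real matrices M and M' with nonnegative entries whose columns each sum to 1 such that P' = M'·P and P = M·P'. Then M and M' are permutation matrices. -/
namespace IC12

/-- A matrix is column-stochastic: nonnegative entries, each column sums to 1. -/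
def ColStoch {m k : ℕ} (A : Matrix (Fin m) (Fin k) ℝ) : Prop :=
  (∀ i j, 0 ≤ A i j) ∧ ∀ j, ∑ i, A i j = 1

/-- A permutation matrix: a 0–1 matrix with exactly one 1 in each row and column. -/
def IsPermMatrix {n : ℕ} (M : Matrix (Fin n) (Fin n) ℝ) : Prop :=
  ∃ σ : Equiv.Perm (Fin n), ∀ i j, M i j = if i = σ j then 1 else 0

/-!
If `M * M' * P = P`, each row of `P`, viewed in the strictly convex space `ℓ²`, is a nonnegative
combination `vᵢ = ∑ⱼ Aᵢⱼ vⱼ` with `A = M * M'` column-stochastic. Summing the triangle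
inequalities `‖vᵢ‖ ≤ ∑ⱼ Aᵢⱼ ‖vⱼ‖` over `i` gives an equality, so each of them is an equality, and
by strict convexity all the vectors `Aᵢⱼ vⱼ` with `Aᵢⱼ ≠ 0` lie on one ray. Since no two rows of `P`
are proportional, this forces `A = 1`. Finally, a column-stochastic matrix with a nonnegative
inverse has a single nonzero entry, necessarily `1`, in each column, and its column pattern is
injective, so it is a permutation matrix.
-/

lemma ColStoch.mul {m l k : ℕ} {A : Matrix (Fin m) (Fin l) ℝ} {B : Matrix (Fin l) (Fin k) ℝ}
    (hA : ColStoch A) (hB : ColStoch B) : ColStoch (A * B) := by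
  simp only [ColStoch, Matrix.mul_apply]
  refine ⟨fun i j => Finset.sum_nonneg fun t _ => mul_nonneg (hA.1 i t) (hB.1 t j), fun j => ?_⟩
  rw [Finset.sum_comm]
  simp only [← Finset.sum_mul, hA.2, one_mul, hB.2]

lemma norm_add_eq_of_norm_sum_eq_sum_norm {E ι : Type*} [SeminormedAddCommGroup E]
    {s : Finset ι} {w : ι → E} (h : ‖∑ j ∈ s, w j‖ = ∑ j ∈ s, ‖w j‖)
    {a b : ι} (ha : a ∈ s) (hb : b ∈ s) (hab : a ≠ b) :
    ‖w a + w b‖ = ‖w a‖ + ‖w b‖ := by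
  classical
  have hsub : {a, b} ⊆ s := Finset.insert_subset ha (Finset.singleton_subset_iff.mpr hb)
  rw [← Finset.sum_sdiff hsub, ← Finset.sum_sdiff hsub (f := fun j => ‖w j‖),
    Finset.sum_pair hab, Finset.sum_pair hab] at h
  have := norm_add_le (∑ j ∈ s \ {a, b}, w j) (w a + w b)
  have := norm_sum_le (s \ {a, b}) w
  linarith [norm_add_le (w a) (w b)]

lemma norm_sum_smul_eq_sum_norm_of_colStoch {E : Type*} [SeminormedAddCommGroup E]
    [NormedSpace ℝ E] {n : ℕ} {A : Matrix (Fin n) (Fin n) ℝ}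
    (hA : ColStoch A) {v : Fin n → E} (hv : ∀ i, v i = ∑ j, A i j • v j) (i : Fin n) :
    ‖∑ j, A i j • v j‖ = ∑ j, ‖A i j • v j‖ := by
  have hle : ∀ i, ‖∑ j, A i j • v j‖ ≤ ∑ j, ‖A i j • v j‖ := fun i => norm_sum_le _ _
  have htotal : ∑ i, ∑ j, ‖A i j • v j‖ = ∑ i, ‖∑ j, A i j • v j‖ := by
    simp only [norm_smul, Real.norm_of_nonneg (hA.1 _ _)]
    rw [Finset.sum_comm]
    simp only [← Finset.sum_mul, hA.2, one_mul, ← hv]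
  exact (Finset.sum_eq_sum_iff_of_le fun i _ => hle i).mp htotal.symm i (Finset.mem_univ i)

section StrictlyConvex

variable {E : Type*} [NormedAddCommGroup E] [NormedSpace ℝ E] [StrictConvexSpace ℝ E]

lemma eq_of_colStoch_fixed_of_ne_zero {n : ℕ} {A : Matrix (Fin n) (Fin n) ℝ}
    (hA : ColStoch A) {v : Fin n → E} (hv : ∀ i, v i = ∑ j, A i j • v j)
    (hnorep : ∀ i j, i ≠ j → ∀ c : ℝ, v i ≠ c • v j)
    {i j₁ j₂ : Fin n} (h₁ : A i j₁ ≠ 0) (h₂ : A i j₂ ≠ 0) : j₁ = j₂ := by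
  by_contra hne
  have hray : SameRay ℝ (A i j₁ • v j₁) (A i j₂ • v j₂) :=
    sameRay_iff_norm_add.mpr <| norm_add_eq_of_norm_sum_eq_sum_norm
      (norm_sum_smul_eq_sum_norm_of_colStoch hA hv i) (Finset.mem_univ _) (Finset.mem_univ _) hne
  have hv₁ : v j₁ ≠ 0 := by simpa using hnorep j₁ j₂ hne 0
  have hv₂ : v j₂ ≠ 0 := by simpa using hnorep j₂ j₁ (Ne.symm hne) 0
  obtain ⟨r, -, hr⟩ := hray.exists_pos_left (smul_ne_zero h₁ hv₁) (smul_ne_zero h₂ hv₂)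
  refine hnorep j₂ j₁ (Ne.symm hne) ((A i j₂)⁻¹ * r * A i j₁) ?_
  rw [mul_assoc, mul_smul, ← smul_smul, hr, inv_smul_smul₀ h₂]

lemma eq_one_of_colStoch_fixed {n : ℕ} {A : Matrix (Fin n) (Fin n) ℝ}
    (hA : ColStoch A) {v : Fin n → E} (hv : ∀ i, v i = ∑ j, A i j • v j)
    (hnorep : ∀ i j, i ≠ j → ∀ c : ℝ, v i ≠ c • v j) : A = 1 := by
  have hoff : ∀ i j, i ≠ j → A i j = 0 := by
    intro i j hij
    by_contra hAij
    refine hnorep i j hij (A i j) ?_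
    rw [hv i, Finset.sum_eq_single j (fun j' _ hj' => ?_) (by simp)]
    have hAij' : A i j' = 0 :=
      by_contra fun h => hj' (eq_of_colStoch_fixed_of_ne_zero hA hv hnorep h hAij)
    rw [hAij', zero_smul]
  ext i j
  rcases eq_or_ne i j with rfl | hij
  · have hcol := hA.2 i
    rw [Finset.sum_eq_single i (fun b _ hb => hoff b i hb) (by simp)] at hcol
    rw [hcol, Matrix.one_apply_eq]
  · rw [hoff i j hij, Matrix.one_apply_ne hij]

end StrictlyConvex

lemma eq_one_of_colStoch_mul_eq_self {n k : ℕ} {A : Matrix (Fin n) (Fin n) ℝ}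
    (hA : ColStoch A) {P : Matrix (Fin n) (Fin k) ℝ}
    (hnorep : ∀ i j : Fin n, i ≠ j → ∀ c : ℝ, P i ≠ c • P j) (hAP : A * P = P) : A = 1 := by
  let e := (WithLp.linearEquiv 2 ℝ (Fin k → ℝ)).symm
  refine eq_one_of_colStoch_fixed hA (v := fun i => e (P i)) (fun i => ?_) fun i j hij c => ?_
  · conv_lhs => rw [← hAP, Matrix.mul_apply_eq_vecMul, Matrix.vecMul_eq_sum]
    simp only [map_sum, map_smul]
  · rw [← map_smul]
    exact e.injective.ne (hnorep i j hij c)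

lemma eq_of_mul_eq_one_of_apply_ne_zero {ι : Type*} [Fintype ι] [DecidableEq ι]
    {M M' : Matrix ι ι ℝ} (hM : ∀ i j, 0 ≤ M i j) (hM' : ∀ i j, 0 ≤ M' i j)
    (h : M * M' = 1) {i i' l : ι} (hi : M i l ≠ 0) (hi' : M i' l ≠ 0) : i = i' := by
  obtain ⟨j, -, hj⟩ : ∃ j ∈ Finset.univ, M' l j * M j l ≠ 0 := by
    refine Finset.exists_ne_zero_of_sum_ne_zero ?_
    rw [← Matrix.mul_apply, mul_eq_one_comm.mp h, Matrix.one_apply_eq]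
    exact one_ne_zero
  have hlj : 0 < M' l j := lt_of_le_of_ne (hM' l j) (left_ne_zero_of_mul hj).symm
  have heq : ∀ i₀, M i₀ l ≠ 0 → i₀ = j := by
    intro i₀ hi₀
    by_contra hne
    have hpos : 0 < (M * M') i₀ j :=
      Finset.sum_pos' (fun t _ => mul_nonneg (hM i₀ t) (hM' t j))
        ⟨l, Finset.mem_univ l, mul_pos (lt_of_le_of_ne (hM i₀ l) hi₀.symm) hlj⟩
    rw [h, Matrix.one_apply_ne hne] at hpos
    exact hpos.false
  rw [heq i hi, heq i' hi']

lemma ColStoch.exists_eq_ite_of_subsingleton {n : ℕ} {M : Matrix (Fin n) (Fin n) ℝ}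
    (hM : ColStoch M) (hsub : ∀ i i' l, M i l ≠ 0 → M i' l ≠ 0 → i = i') :
    ∃ σ : Fin n → Fin n, ∀ i j, M i j = if i = σ j then 1 else 0 := by
  have hex : ∀ j, ∃ i, M i j ≠ 0 := fun j => by
    obtain ⟨i, -, hi⟩ := Finset.exists_ne_zero_of_sum_ne_zero (hM.2 j ▸ one_ne_zero)
    exact ⟨i, hi⟩
  choose σ hσ using hex
  have hzero : ∀ i j, i ≠ σ j → M i j = 0 := fun i j hi =>
    by_contra fun h => hi (hsub i (σ j) j h (hσ j))
  refine ⟨σ, fun i j => ?_⟩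
  split_ifs with hi
  · have hcol := hM.2 j
    rwa [Finset.sum_eq_single (σ j) (fun b _ hb => hzero b j hb) (by simp), ← hi] at hcol
  · exact hzero i j hi

lemma isPermMatrix_of_mul_eq_one {n : ℕ} {M M' : Matrix (Fin n) (Fin n) ℝ}
    (hM : ColStoch M) (hM' : ∀ i j, 0 ≤ M' i j) (h : M * M' = 1) : IsPermMatrix M := by
  obtain ⟨σ, hσ⟩ := hM.exists_eq_ite_of_subsingleton
    fun _ _ _ => eq_of_mul_eq_one_of_apply_ne_zero hM.1 hM' h
  have hinj : Function.Injective σ := by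
    intro a b hab
    have hcol : (M' * M) a a = (M' * M) a b := by simp only [Matrix.mul_apply, hσ, hab]
    rw [mul_eq_one_comm.mp h, Matrix.one_apply_eq, Matrix.one_apply] at hcol
    by_contra hne
    simp [hne] at hcol
  exact ⟨Equiv.ofBijective σ hinj.bijective_of_finite, hσ⟩

theorem blackwell_equivalence_general {n k : ℕ} (P P' : Matrix (Fin n) (Fin k) ℝ)
    (hnorep : ∀ i j : Fin n, i ≠ j → ∀ c : ℝ, P i ≠ c • P j)
    (M M' : Matrix (Fin n) (Fin n) ℝ) (hM : ColStoch M) (hM' : ColStoch M')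
    (h1 : P' = M' * P) (h2 : P = M * P') :
    IsPermMatrix M ∧ IsPermMatrix M' := by
  have hone : M * M' = 1 :=
    eq_one_of_colStoch_mul_eq_self (hM.mul hM') hnorep (by rw [Matrix.mul_assoc, ← h1, ← h2])
  exact ⟨isPermMatrix_of_mul_eq_one hM hM'.1 hone,
    isPermMatrix_of_mul_eq_one hM' hM.1 (mul_eq_one_comm.mp hone)⟩

/-- Lemma `lem:BWequiv`, Blackwell equivalence: if two experiments
(with no two rows of P proportional) are mutual garblings of each other, the garbling
matrices are permutation matrices. -/
theorem blackwell_equivalence {n k : ℕ} (P P' : Matrix (Fin n) (Fin k) ℝ)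
    (hP : ColStoch P) (hP' : ColStoch P')
    (hnorep : ∀ i j : Fin n, i ≠ j → ∀ c : ℝ, P i ≠ c • P j)
    (M M' : Matrix (Fin n) (Fin n) ℝ) (hM : ColStoch M) (hM' : ColStoch M')
    (h1 : P' = M' * P) (h2 : P = M * P') :
    IsPermMatrix M ∧ IsPermMatrix M' :=
  blackwell_equivalence_general P P' hnorep M M' hM hM' h1 h2

end IC12
end

section
/- Let K ≥ 3 be an integer and let Q be a symmetric K×K real matrix with Q·𝟙 = 0 (every row of Q sums to 0). Let U = {μ ∈ ℝ^{K−1} : μᵢ > 0 for all i and ∑_{i=1}^{K−1} μᵢ < 1}, and for μ ∈ U write μ_K = 1 − ∑_{i=1}^{K−1} μᵢ. Suppose there exists a function H : U → ℝ of class C³ such that for all μ ∈ U and all 1 ≤ i, j ≤ K−1, the second partial derivative ∂²H/∂μᵢ∂μⱼ(μ) equals Q_{ij}/(μᵢμⱼ) − Q_{iK}/(μᵢμ_K) − Q_{jK}/(μⱼμ_K) + Q_{KK}/μ_K². Then Q = 0. (Consequently, for three or more states, no nonzero prior-independent local cost kernel B(μ) = diag(μ)⁻¹·Q·diag(μ)⁻¹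 is a Hessian, so no prior-independent direct cost can generate a posterior separable indirect cost.) -/
/-! Moving along the chart direction `e_k`, the `(i,k)` Hessian entry must change as fast as the
`(k,k)` entry does along `e_i`: both are the third derivative `∂_i ∂_k ∂_k H`, which is symmetric
since `H` is `C³`. For the prescribed entries this says
`Q_ik μ_K² + Q_iK μ_k² = Q_kK μ_i (μ_K + μ_k)` on the whole simplex, and as `(μ_i, μ_k, μ_K)`
ranges over an open set, `Q_ik = Q_iK = Q_kK = 0` whenever `i ≠ k < K`. With `K ≥ 3` every index
below `K` has a partner, so all off-diagonal entries vanish (the last row by symmetry), and the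
zero row sums then kill the diagonal. -/

open Filter Topology

section Calculus

variable {𝕜 E F : Type*} [RCLike 𝕜] [NormedAddCommGroup E] [NormedSpace 𝕜 E]
  [NormedAddCommGroup F] [NormedSpace 𝕜 F]

theorem ContDiffAt.fderiv_fderiv_fderiv_apply_comm {f : E → F} {x : E}
    (hf : ContDiffAt 𝕜 3 f x) (u v w : E) :
    fderiv 𝕜 (fun y => fderiv 𝕜 (fun z => fderiv 𝕜 f z v) y w) x u =
      fderiv 𝕜 (fun y => fderiv 𝕜 (fun z => fderiv 𝕜 f z v) y u) x w := by
  set g := fun z => fderiv 𝕜 f z v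
  have hg : ContDiffAt 𝕜 2 g x := (hf.fderiv_right (by norm_num)).clm_apply contDiffAt_const
  have hdg : DifferentiableAt 𝕜 (fderiv 𝕜 g) x :=
    (hg.fderiv_right (m := 1) (by norm_num)).differentiableAt one_ne_zero
  have hcurry (a b : E) :
      fderiv 𝕜 (fun y => fderiv 𝕜 g y b) x a = fderiv 𝕜 (fderiv 𝕜 g) x a b := by
    rw [fderiv_clm_apply hdg (differentiableAt_const b)]
    simp
  rw [hcurry, hcurry]
  exact hg.isSymmSndFDerivAt (by simp [minSmoothness_of_isRCLikeNormedField]) u w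

theorem fderiv_apply_eq_of_hasDerivAt_line {f R : E → F} {x v : E} {c : F}
    (hf : DifferentiableAt 𝕜 f x) (hR : f =ᶠ[𝓝 x] R)
    (h : HasDerivAt (fun t : 𝕜 => R (x + t • v)) c 0) : fderiv 𝕜 f x v = c := by
  rw [← hf.lineDeriv_eq_fderiv, hR.lineDeriv_eq]
  exact h.deriv

end Calculus

theorem Matrix.eq_zero_of_offDiag_eq_zero {ι α : Type*} [Fintype ι] [AddCommMonoid α]
    {Q : Matrix ι ι α} (hrow : ∀ i, ∑ j, Q i j = 0) (hoff : ∀ i j, i ≠ j → Q i j = 0) :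
    Q = 0 := by
  ext i j
  obtain rfl | hij := eq_or_ne i j
  · rw [Matrix.zero_apply, ← hrow i,
      Finset.sum_eq_single i (fun j _ hj => hoff i j hj.symm) (by simp)]
  · exact hoff i j hij

theorem sum_add_smul_pi_single {ι R : Type*} [Fintype ι] [DecidableEq ι] [Semiring R]
    (μ : ι → R) (t : R) (k : ι) : ∑ l, (μ + t • (Pi.single k 1 : ι → R)) l = ∑ l, μ l + t := by
  simp [Finset.sum_add_distrib, ← Finset.mul_sum]

theorem Fin.exists_castLE_or_eq_sub_one {K : ℕ} (p : Fin K) (hK : K - 1 < K) :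
    (∃ i : Fin (K - 1), Fin.castLE (Nat.sub_le K 1) i = p) ∨ p = ⟨K - 1, hK⟩ := by
  by_cases hp : (p : ℕ) < K - 1
  · exact .inl ⟨⟨p, hp⟩, rfl⟩
  · exact .inr (Fin.ext (by dsimp only; omega))

namespace IC14

/-- The kernel `diag(μ)⁻¹ Q diag(μ)⁻¹` evaluated on the chart directions `e_i - e_K`, `e_j - e_K`,
with `x = μ_i`, `y = μ_j`, `s = μ_K` and `a = Q_ij`, `b = Q_iK`, `c = Q_jK`, `d = Q_KK`. -/
noncomputable def chartKernel (a b c d x y s : ℝ) : ℝ :=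
  a / (x * y) - b / (x * s) - c / (y * s) + d / s ^ 2

theorem hasDerivAt_chartKernel_add_sub (a b c d : ℝ) {x y s : ℝ} (hx : x ≠ 0) (hy : y ≠ 0)
    (hs : s ≠ 0) :
    HasDerivAt (fun t => chartKernel a b c d x (y + t) (s - t))
      (-a / (x * y ^ 2) - b / (x * s ^ 2) + c * (s - y) / (y ^ 2 * s ^ 2) + 2 * d / s ^ 3) 0 := by
  have hy' : HasDerivAt (fun t : ℝ => y + t) 1 0 := (hasDerivAt_id' 0).const_add y
  have hs' : HasDerivAt (fun t : ℝ => s - t) (-1) 0 := (hasDerivAt_id' 0).const_sub s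
  have := ((((hasDerivAt_const 0 a).div (hy'.const_mul x) (by simp [hx, hy])).sub
    ((hasDerivAt_const 0 b).div (hs'.const_mul x) (by simp [hx, hs]))).sub
    ((hasDerivAt_const 0 c).div (hy'.mul hs') (by simp [hy, hs]))).add
    ((hasDerivAt_const 0 d).div (hs'.pow 2) (by simp [hs]))
  refine this.congr_deriv ?_
  simp only [add_zero, sub_zero, Pi.mul_apply, Pi.pow_apply]
  field_simp
  ring

theorem hasDerivAt_chartKernel_diag_sub (a c d : ℝ) {y s : ℝ} (hy : y ≠ 0) (hs : s ≠ 0) :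
    HasDerivAt (fun t => chartKernel a c c d y y (s - t))
      (-2 * c / (y * s ^ 2) + 2 * d / s ^ 3) 0 := by
  have hs' : HasDerivAt (fun t : ℝ => s - t) (-1) 0 := (hasDerivAt_id' 0).const_sub s
  have hc := (hasDerivAt_const 0 c).div (hs'.const_mul y) (by simp [hy, hs])
  have := (((hasDerivAt_const 0 (a / (y * y))).sub hc).sub hc).add
    ((hasDerivAt_const 0 d).div (hs'.pow 2) (by simp [hs]))
  refine this.congr_deriv ?_
  simp only [sub_zero, Pi.pow_apply]
  field_simp
  ring

theorem chartKernel_cross_relation {n : ℕ} {H : (Fin n → ℝ) → ℝ} {U : Set (Fin n → ℝ)}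
    (hU : IsOpen U) (hH : ContDiffOn ℝ 3 H U) {i k : Fin n} (hik : i ≠ k) {a b c d a' : ℝ}
    (hHik : ∀ ν ∈ U, fderiv ℝ (fun ρ => fderiv ℝ H ρ (Pi.single k 1)) ν (Pi.single i 1) =
      chartKernel a b c d (ν i) (ν k) (1 - ∑ l, ν l))
    (hHkk : ∀ ν ∈ U, fderiv ℝ (fun ρ => fderiv ℝ H ρ (Pi.single k 1)) ν (Pi.single k 1) =
      chartKernel a' c c d (ν k) (ν k) (1 - ∑ l, ν l))
    {μ : Fin n → ℝ} (hμ : μ ∈ U) (hi : μ i ≠ 0) (hk : μ k ≠ 0) (hs : 1 - ∑ l, μ l ≠ 0) :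
    a * (1 - ∑ l, μ l) ^ 2 + b * μ k ^ 2 = c * μ i * (1 - ∑ l, μ l + μ k) := by
  set s := 1 - ∑ l, μ l with hs_def
  clear_value s
  have hH3 : ContDiffAt ℝ 3 H μ := hH.contDiffAt (hU.mem_nhds hμ)
  have hdiff (w : Fin n → ℝ) :
      DifferentiableAt ℝ (fun ν => fderiv ℝ (fun ρ => fderiv ℝ H ρ (Pi.single k 1)) ν w) μ := by
    have hg := (hH3.fderiv_right (m := 2) (by norm_num)).clm_apply
      (contDiffAt_const (c := Pi.single k 1))
    exact ((hg.fderiv_right (m := 1) (by norm_num)).clm_apply contDiffAt_const).differentiableAt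
      one_ne_zero
  have hline (v : Fin n) (t : ℝ) : 1 - ∑ l, (μ + t • (Pi.single v 1 : Fin n → ℝ)) l = s - t := by
    rw [sum_add_smul_pi_single, sub_add_eq_sub_sub, hs_def]
  have hik' := fderiv_apply_eq_of_hasDerivAt_line (hdiff _)
    (eventually_of_mem (hU.mem_nhds hμ) hHik) (v := Pi.single k 1)
    ((hasDerivAt_chartKernel_add_sub a b c d hi hk hs).congr_of_eventuallyEq
      (.of_forall fun t => by simp only [hline]; simp [hik]))
  have hkk' := fderiv_apply_eq_of_hasDerivAt_line (hdiff _)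
    (eventually_of_mem (hU.mem_nhds hμ) hHkk) (v := Pi.single i 1)
    ((hasDerivAt_chartKernel_diag_sub a' c d hk hs).congr_of_eventuallyEq
      (.of_forall fun t => by simp only [hline]; simp [hik.symm]))
  have := hH3.fderiv_fderiv_fderiv_apply_comm (Pi.single k 1) (Pi.single k 1) (Pi.single i 1)
  rw [hik', hkk'] at this
  field_simp at this
  apply mul_left_cancel₀ hs
  linear_combination -this

def openSimplex (n : ℕ) : Set (Fin n → ℝ) := {μ | (∀ i, 0 < μ i) ∧ ∑ i, μ i < 1}

theorem isOpen_openSimplex (n : ℕ) : IsOpen (openSimplex n) := by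
  show IsOpen ({μ : Fin n → ℝ | ∀ i, 0 < μ i} ∩ {μ | ∑ i, μ i < 1})
  refine IsOpen.inter ?_ (isOpen_lt (by fun_prop) continuous_const)
  simp_rw [Set.ofPred_forall]
  exact isOpen_iInter_of_finite fun i => isOpen_lt continuous_const (continuous_apply i)

theorem exists_mem_openSimplex {n : ℕ} {i k : Fin n} (hik : i ≠ k) {p q s : ℝ} (hp : 0 < p)
    (hq : 0 < q) (hs : 0 < s) (hsum : p + q + s = 2 / n) :
    ∃ μ ∈ openSimplex n, μ i = p ∧ μ k = q ∧ 1 - ∑ l, μ l = s := by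
  have hn : (0 : ℝ) < n := Nat.cast_pos.2 (Fin.pos i)
  set μ : Fin n → ℝ :=
    (fun _ => (n : ℝ)⁻¹) + Pi.single i (p - (n : ℝ)⁻¹) + Pi.single k (q - (n : ℝ)⁻¹)
  have hsum_μ : ∑ l, μ l = 1 - s := by
    simp only [μ, Pi.add_apply, Finset.sum_add_distrib, Finset.sum_pi_single', Finset.mem_univ,
      if_true, Finset.sum_const, Finset.card_univ, Fintype.card_fin, nsmul_eq_mul]
    rw [mul_inv_cancel₀ hn.ne']
    linear_combination hsum
  refine ⟨μ, ⟨fun l => ?_, by linarith⟩, by simp [μ, hik], by simp [μ, hik.symm], by linarith⟩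
  by_cases hli : l = i
  · subst hli; simpa [μ, hik] using hp
  by_cases hlk : l = k
  · subst hlk; simpa [μ, hli] using hq
  simpa [μ, hli, hlk] using hn

theorem coeffs_eq_zero_of_forall_sum_eq {a b c C : ℝ} (hC : 0 < C)
    (h : ∀ p q s : ℝ, 0 < p → 0 < q → 0 < s → p + q + s = C →
      a * s ^ 2 + b * q ^ 2 = c * p * (s + q)) :
    a = 0 ∧ b = 0 ∧ c = 0 := by
  have h₁ := h (C / 2) (C / 4) (C / 4) (by positivity) (by positivity) (by positivity) (by ring)
  have h₂ := h (C / 4) (C / 2) (C / 4) (by positivity) (by positivity) (by positivity) (by ring)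
  have h₃ := h (C / 4) (C / 4) (C / 2) (by positivity) (by positivity) (by positivity) (by ring)
  have hC2 : C ^ 2 ≠ 0 := by positivity
  refine ⟨?_, ?_, ?_⟩ <;> apply mul_right_cancel₀ hC2 <;> linarith

theorem chartKernel_coeffs_eq_zero {n : ℕ} {H : (Fin n → ℝ) → ℝ}
    (hH : ContDiffOn ℝ 3 H (openSimplex n)) {i k : Fin n} (hik : i ≠ k) {a b c d a' : ℝ}
    (hHik : ∀ ν ∈ openSimplex n,
      fderiv ℝ (fun ρ => fderiv ℝ H ρ (Pi.single k 1)) ν (Pi.single i 1) =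
        chartKernel a b c d (ν i) (ν k) (1 - ∑ l, ν l))
    (hHkk : ∀ ν ∈ openSimplex n,
      fderiv ℝ (fun ρ => fderiv ℝ H ρ (Pi.single k 1)) ν (Pi.single k 1) =
        chartKernel a' c c d (ν k) (ν k) (1 - ∑ l, ν l)) :
    a = 0 ∧ b = 0 ∧ c = 0 := by
  have hn : (0 : ℝ) < n := Nat.cast_pos.2 (Fin.pos i)
  refine coeffs_eq_zero_of_forall_sum_eq (C := 2 / n) (by positivity)
    fun p q s hp hq hs hsum => ?_
  obtain ⟨μ, hμ, rfl, rfl, rfl⟩ := exists_mem_openSimplex hik hp hq hs hsum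
  exact chartKernel_cross_relation (isOpen_openSimplex n) hH hik hHik hHkk hμ hp.ne' hq.ne' hs.ne'

/-- for K ≥ 3 states, no nonzero symmetric Q with zero row sums yields a
prior-independent local kernel B(μ) = diag(μ)⁻¹ Q diag(μ)⁻¹ that is a Hessian: if some C³
function H on the open coordinate simplex U ⊆ ℝ^{K−1} has the prescribed second partial
derivatives, then Q = 0. -/
theorem no_prior_independent_hessian (K : ℕ) (hK : 3 ≤ K)
    (Q : Matrix (Fin K) (Fin K) ℝ) (hsymm : Q.IsSymm)
    (hrow : ∀ i, ∑ j, Q i j = 0)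
    (H : (Fin (K - 1) → ℝ) → ℝ)
    (hH : ContDiffOn ℝ 3 H {μ : Fin (K - 1) → ℝ | (∀ i, 0 < μ i) ∧ ∑ i, μ i < 1})
    (hHess : ∀ μ ∈ {μ : Fin (K - 1) → ℝ | (∀ i, 0 < μ i) ∧ ∑ i, μ i < 1},
      ∀ i j : Fin (K - 1),
        fderiv ℝ (fun ν => fderiv ℝ H ν (Pi.single j 1)) μ (Pi.single i 1) =
          Q (Fin.castLE (Nat.sub_le K 1) i) (Fin.castLE (Nat.sub_le K 1) j) / (μ i * μ j)
          - Q (Fin.castLE (Nat.sub_le K 1) i) ⟨K - 1, by omega⟩ / (μ i * (1 - ∑ l, μ l))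
          - Q (Fin.castLE (Nat.sub_le K 1) j) ⟨K - 1, by omega⟩ / (μ j * (1 - ∑ l, μ l))
          + Q ⟨K - 1, by omega⟩ ⟨K - 1, by omega⟩ / (1 - ∑ l, μ l) ^ 2) :
    Q = 0 := by
  have hpair (i k : Fin (K - 1)) (hik : i ≠ k) :
      Q (Fin.castLE (Nat.sub_le K 1) i) (Fin.castLE (Nat.sub_le K 1) k) = 0 ∧
        Q (Fin.castLE (Nat.sub_le K 1) i) ⟨K - 1, by omega⟩ = 0 ∧
        Q (Fin.castLE (Nat.sub_le K 1) k) ⟨K - 1, by omega⟩ = 0 :=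
    chartKernel_coeffs_eq_zero hH hik (fun ν hν => hHess ν hν i k) (fun ν hν => hHess ν hν k k)
  have : Nontrivial (Fin (K - 1)) := Fin.nontrivial_iff_two_le.2 (by omega)
  have hlast (i : Fin (K - 1)) : Q (Fin.castLE (Nat.sub_le K 1) i) ⟨K - 1, by omega⟩ = 0 :=
    let ⟨k, hk⟩ := exists_ne i
    (hpair i k hk.symm).2.1
  refine Matrix.eq_zero_of_offDiag_eq_zero hrow fun p q hpq => ?_
  rcases Fin.exists_castLE_or_eq_sub_one p (by omega) with ⟨i, rfl⟩ | rfl <;>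
    rcases Fin.exists_castLE_or_eq_sub_one q (by omega) with ⟨k, rfl⟩ | rfl
  · exact (hpair i k (ne_of_apply_ne _ hpq)).1
  · exact hlast i
  · rw [hsymm.apply]
    exact hlast k
  · exact absurd rfl hpq

end IC14
end

section
/- Let S be a nonempty finite set, let α ∈ ℝ, let μ ∈ (0,1), and let P⁰, P¹ : S → (0,1] satisfy ∑_s P⁰(s) = ∑_s P¹(s) = 1 (the conditional signal distributions of a binary-state experiment, with prior probability μ of state 1). Define the signal marginal P_S(s) = (1−μ)·P⁰(s) + μ·P¹(s), the posterior probability of state 1 after signal s, ν(s) = μ·P¹(s)/P_S(s) ∈ (0,1), and H : (0,1) → ℝ by H(q) = α·(2(q·log q + (1−q)·log(1−q)) − log q − log(1−q)). Then ∑_s P_S(s)·H(ν(s)) − H(μ) = 2α·( I + (1/2)·(D(P_S‖P⁰) + D(P_S‖P¹)) ), where I = ∑_s [ (1−μ)P⁰(s)·log(P⁰(s)/P_S(s)) + μP¹(s)·log(P¹(s)/P_S(s)) ] is the mutual information between state and signal, and D(P_S‖Pˣ) = ∑_s P_S(s)·log(P_S(s)/Pˣ(s)) is the Kullback–Leibler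 divergence from the conditional distribution Pˣ to the marginal P_S. -/
namespace IC15

/-- The potential H(q) = α(2(q log q + (1−q)log(1−q)) − log q − log(1−q)). -/
noncomputable def Hpot (α q : ℝ) : ℝ :=
  α * (2 * (q * Real.log q + (1 - q) * Real.log (1 - q)) - Real.log q - Real.log (1 - q))

/-!
The potential splits as `H = -2α·h + α·(-log q - log (1 - q))`, with `h` the binary entropy,
and the Bregman cost `∑ P_S H(ν) - H(μ)` is linear in the potential. The entropy part
contributes the mutual information, because `P_S(s)·ν(s) = μ·P¹(s)` and
`P_S(s)·(1 - ν(s)) = (1 - μ)·P⁰(s)`. For the log-barrier part, `-log ν(s) = log (P_S(s) / P¹(s)) - log μ`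
and similarly for `1 - ν(s)`; averaging over `P_S` gives the two divergences, and the
`log μ`, `log (1 - μ)` terms cancel against `H(μ)`.
-/

open Real Finset

section Experiment

variable {S : Type*} {μ : ℝ} {P0 P1 : S → ℝ}

def marginal (μ : ℝ) (P0 P1 : S → ℝ) (s : S) : ℝ := (1 - μ) * P0 s + μ * P1 s

noncomputable def posterior (μ : ℝ) (P0 P1 : S → ℝ) (s : S) : ℝ :=
  μ * P1 s / marginal μ P0 P1 s

noncomputable def bregmanCost [Fintype S] (μ : ℝ) (P0 P1 : S → ℝ) (H : ℝ → ℝ) : ℝ :=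
  ∑ s, marginal μ P0 P1 s * H (posterior μ P0 P1 s) - H μ

noncomputable def mutualInfo [Fintype S] (μ : ℝ) (P0 P1 : S → ℝ) : ℝ :=
  ∑ s, ((1 - μ) * P0 s * log (P0 s / marginal μ P0 P1 s)
    + μ * P1 s * log (P1 s / marginal μ P0 P1 s))

noncomputable def klDiv [Fintype S] (Q P : S → ℝ) : ℝ := ∑ s, Q s * log (Q s / P s)

lemma marginal_pos (hμ0 : 0 < μ) (hμ1 : μ < 1) {s : S} (h0 : 0 < P0 s) (h1 : 0 < P1 s) :
    0 < marginal μ P0 P1 s := by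
  have : 0 < 1 - μ := by linarith
  unfold marginal
  positivity

lemma sum_marginal [Fintype S] (h0 : ∑ s, P0 s = 1) (h1 : ∑ s, P1 s = 1) :
    ∑ s, marginal μ P0 P1 s = 1 := by
  simp only [marginal, sum_add_distrib, ← mul_sum, h0, h1]
  ring

lemma one_sub_posterior {s : S} (h : marginal μ P0 P1 s ≠ 0) :
    1 - posterior μ P0 P1 s = (1 - μ) * P0 s / marginal μ P0 P1 s := by
  rw [posterior, eq_div_iff h, sub_mul, div_mul_cancel₀ _ h, one_mul, marginal]
  ring

lemma marginal_mul_binEntropy_posterior (hμ0 : 0 < μ) (hμ1 : μ < 1) {s : S}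
    (h0 : 0 < P0 s) (h1 : 0 < P1 s) :
    marginal μ P0 P1 s * binEntropy (posterior μ P0 P1 s)
      = -((1 - μ) * P0 s * log (P0 s / marginal μ P0 P1 s)
          + μ * P1 s * log (P1 s / marginal μ P0 P1 s))
        - (P0 s * ((1 - μ) * log (1 - μ)) + P1 s * (μ * log μ)) := by
  have hμ1' : 0 < 1 - μ := by linarith
  have hm := marginal_pos hμ0 hμ1 h0 h1
  rw [binEntropy, one_sub_posterior hm.ne', posterior, log_inv, log_inv,
    log_div (by positivity) hm.ne', log_div (by positivity) hm.ne',
    log_mul hμ0.ne' h1.ne', log_mul hμ1'.ne' h0.ne', log_div h0.ne' hm.ne',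
    log_div h1.ne' hm.ne']
  field_simp
  ring

lemma marginal_mul_log_posterior_add_log_one_sub (hμ0 : 0 < μ) (hμ1 : μ < 1) {s : S}
    (h0 : 0 < P0 s) (h1 : 0 < P1 s) :
    marginal μ P0 P1 s * (log (posterior μ P0 P1 s) + log (1 - posterior μ P0 P1 s))
      = -(marginal μ P0 P1 s * log (marginal μ P0 P1 s / P0 s)
          + marginal μ P0 P1 s * log (marginal μ P0 P1 s / P1 s))
        + marginal μ P0 P1 s * (log μ + log (1 - μ)) := by
  have hμ1' : 0 < 1 - μ := by linarith
  have hm := marginal_pos hμ0 hμ1 h0 h1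
  rw [one_sub_posterior hm.ne', posterior,
    log_div (by positivity) hm.ne', log_div (by positivity) hm.ne',
    log_mul hμ0.ne' h1.ne', log_mul hμ1'.ne' h0.ne', log_div hm.ne' h0.ne',
    log_div hm.ne' h1.ne']
  ring

variable [Fintype S]

lemma bregmanCost_linear_comb (c d : ℝ) (f g : ℝ → ℝ) :
    bregmanCost μ P0 P1 (fun q => c * f q + d * g q)
      = c * bregmanCost μ P0 P1 f + d * bregmanCost μ P0 P1 g := by
  simp only [bregmanCost, mul_add, sum_add_distrib, mul_left_comm _ c, mul_left_comm _ d,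
    ← mul_sum]
  ring

lemma bregmanCost_binEntropy (hμ0 : 0 < μ) (hμ1 : μ < 1)
    (hP0 : ∀ s, 0 < P0 s) (hP1 : ∀ s, 0 < P1 s)
    (hP0sum : ∑ s, P0 s = 1) (hP1sum : ∑ s, P1 s = 1) :
    bregmanCost μ P0 P1 binEntropy = -mutualInfo μ P0 P1 := by
  rw [bregmanCost, mutualInfo,
    sum_congr rfl fun s _ => marginal_mul_binEntropy_posterior hμ0 hμ1 (hP0 s) (hP1 s)]
  simp only [sum_sub_distrib, sum_neg_distrib, sum_add_distrib, ← sum_mul, hP0sum, hP1sum,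
    binEntropy, log_inv]
  ring

lemma bregmanCost_log_add_log_one_sub (hμ0 : 0 < μ) (hμ1 : μ < 1)
    (hP0 : ∀ s, 0 < P0 s) (hP1 : ∀ s, 0 < P1 s)
    (hP0sum : ∑ s, P0 s = 1) (hP1sum : ∑ s, P1 s = 1) :
    bregmanCost μ P0 P1 (fun q => log q + log (1 - q))
      = -(klDiv (marginal μ P0 P1) P0 + klDiv (marginal μ P0 P1) P1) := by
  rw [bregmanCost, klDiv, klDiv, sum_congr rfl fun s _ =>
    marginal_mul_log_posterior_add_log_one_sub hμ0 hμ1 (hP0 s) (hP1 s)]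
  simp only [sum_add_distrib, sum_neg_distrib, ← sum_mul, sum_marginal hP0sum hP1sum]
  ring

end Experiment

lemma Hpot_eq_binEntropy (α : ℝ) :
    Hpot α = fun q => -(2 * α) * binEntropy q + -α * (log q + log (1 - q)) := by
  ext q
  simp only [Hpot, binEntropy, log_inv]
  ring

theorem binary_bregman_eq_mutualInfo_plus_KL_general {S : Type*} [Fintype S]
    (α μ : ℝ) (hμ0 : 0 < μ) (hμ1 : μ < 1)
    (P0 P1 : S → ℝ)
    (hP0pos : ∀ s, 0 < P0 s) (hP0sum : ∑ s, P0 s = 1)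
    (hP1pos : ∀ s, 0 < P1 s) (hP1sum : ∑ s, P1 s = 1) :
    (∑ s, ((1 - μ) * P0 s + μ * P1 s) *
        Hpot α (μ * P1 s / ((1 - μ) * P0 s + μ * P1 s))) - Hpot α μ
      = 2 * α *
        ((∑ s, ((1 - μ) * P0 s * Real.log (P0 s / ((1 - μ) * P0 s + μ * P1 s))
            + μ * P1 s * Real.log (P1 s / ((1 - μ) * P0 s + μ * P1 s))))
          + (1 / 2) *
            ((∑ s, ((1 - μ) * P0 s + μ * P1 s) *
                Real.log (((1 - μ) * P0 s + μ * P1 s) / P0 s))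
              + (∑ s, ((1 - μ) * P0 s + μ * P1 s) *
                  Real.log (((1 - μ) * P0 s + μ * P1 s) / P1 s)))) := by
  calc bregmanCost μ P0 P1 (Hpot α)
      = -(2 * α) * bregmanCost μ P0 P1 binEntropy
          + -α * bregmanCost μ P0 P1 (fun q => log q + log (1 - q)) := by
        rw [Hpot_eq_binEntropy, bregmanCost_linear_comb]
    _ = 2 * α * (mutualInfo μ P0 P1
          + 1 / 2 * (klDiv (marginal μ P0 P1) P0 + klDiv (marginal μ P0 P1) P1)) := by
        rw [bregmanCost_binEntropy hμ0 hμ1 hP0pos hP1pos hP0sum hP1sum,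
          bregmanCost_log_add_log_one_sub hμ0 hμ1 hP0pos hP1pos hP0sum hP1sum]
        ring

/-- in the binary-state case, the Bregman cost of the potential H equals
2α·(mutual information + ½·(average KL divergence from the signal marginal to the
conditional signal distributions)). -/
theorem binary_bregman_eq_mutualInfo_plus_KL {S : Type*} [Fintype S] [Nonempty S]
    (α μ : ℝ) (hμ0 : 0 < μ) (hμ1 : μ < 1)
    (P0 P1 : S → ℝ)
    (hP0pos : ∀ s, 0 < P0 s) (hP0le : ∀ s, P0 s ≤ 1) (hP0sum : ∑ s, P0 s = 1)
    (hP1pos : ∀ s, 0 < P1 s) (hP1le : ∀ s, P1 s ≤ 1) (hP1sum : ∑ s, P1 s = 1) :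
    (∑ s, ((1 - μ) * P0 s + μ * P1 s) *
        Hpot α (μ * P1 s / ((1 - μ) * P0 s + μ * P1 s))) - Hpot α μ
      = 2 * α *
        ((∑ s, ((1 - μ) * P0 s * Real.log (P0 s / ((1 - μ) * P0 s + μ * P1 s))
            + μ * P1 s * Real.log (P1 s / ((1 - μ) * P0 s + μ * P1 s))))
          + (1 / 2) *
            ((∑ s, ((1 - μ) * P0 s + μ * P1 s) *
                Real.log (((1 - μ) * P0 s + μ * P1 s) / P0 s))
              + (∑ s, ((1 - μ) * P0 s + μ * P1 s) *
                  Real.log (((1 - μ) * P0 s + μ * P1 s) / P1 s)))) :=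
  binary_bregman_eq_mutualInfo_plus_KL_general α μ hμ0 hμ1 P0 P1 hP0pos hP0sum hP1pos hP1sum

end IC15
end
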